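/- arXiv:2010.00232 — 3 statements merged into one kernel-verified Lean document; each statement's English description precedes it below -/
import Mathlib

section
/- The set of basic moves is a Markov basis for two-way tables with fixed margins: for any two nonnegative integer k×k tables n' and n'' with the same row sums and the same column sums, there exists a finite sequence of basic moves m^(1),...,m^(Q) such that n'' = n' + Σ_{j=1}^Q m^(j) and every partial sum n' + Σ_{j=1}^q m^(j) (for q = 1,...,Q) is entrywise nonnegative. -/
/-!
Move `n'` towards `n''` one basic move at a time, measuring progress by the `ℓ¹` distance. If
`n' ≠ n''`, some cell `(i, j)` has `n'' < n'`; equal row sums give a cell `(i, j')` in that row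
with `n' < n''`, and equal column sums a cell `(i', j')` in that column with `n'' < n'`. Moving one
unit from `(i, j)` and `(i', j')` to `(i, j')` and `(i', j)` keeps the table nonnegative (the cells
that lose a unit exceed `n'' ≥ 0`), keeps all margins, and lowers the distance by at least two.
-/

/-- The basic move for two-way tables with `+1` at `(i,j)` and `(i',j')` and `-1`
at `(i,j')` and `(i',j)`, where `i ≠ i'` and `j ≠ j'`. -/
def basicMove {k : ℕ} (i i' j j' : Fin k) : Fin k × Fin k → ℤ := fun p =>
  (if p = (i, j) then 1 else 0) + (if p = (i', j') then 1 else 0)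
    - (if p = (i, j') then 1 else 0) - (if p = (i', j) then 1 else 0)

/-- A table `m` is a basic move if it arises from distinct rows `i ≠ i'` and
distinct columns `j ≠ j'` as above. -/
def IsBasicMove {k : ℕ} (m : Fin k × Fin k → ℤ) : Prop :=
  ∃ i i' j j' : Fin k, i ≠ i' ∧ j ≠ j' ∧ m = basicMove i i' j j'

theorem Fintype.exists_lt_of_sum_eq_of_lt {α M : Type*} [Fintype α] [AddCommMonoid M]
    [LinearOrder M] [IsOrderedCancelAddMonoid M] {f g : α → M}
    (h : ∑ x, f x = ∑ x, g x) {a : α} (hlt : f a < g a) : ∃ b, g b < f b := by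
  by_contra! hle
  exact (Finset.sum_lt_sum (fun b _ => hle b) ⟨a, Finset.mem_univ a, hlt⟩).ne h

theorem Fin.sum_filter_val_lt_succ {M : Type*} [AddCommMonoid M] {Q : ℕ} (g : Fin (Q + 1) → M)
    (q : ℕ) :
    ∑ t ∈ Finset.univ.filter (fun t : Fin (Q + 1) => (t : ℕ) < q + 1), g t
      = g 0 + ∑ t ∈ Finset.univ.filter (fun t : Fin Q => (t : ℕ) < q), g t.succ := by
  simp [Finset.sum_filter, Fin.sum_univ_succ]

section Moves

variable {ι : Type*}

def MoveStep (P : (ι → ℤ) → Prop) (a b : ι → ℤ) : Prop :=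
  P (b - a) ∧ 0 ≤ b

theorem exists_moves_of_reflTransGen_moveStep [Fintype ι] {P : (ι → ℤ) → Prop} {a b : ι → ℤ}
    (h : Relation.ReflTransGen (MoveStep P) a b) (ha : 0 ≤ a) :
    ∃ (Q : ℕ) (m : Fin Q → (ι → ℤ)),
      (∀ t : Fin Q, P (m t)) ∧
      (∀ p : ι, b p = a p + ∑ t : Fin Q, m t p) ∧
      (∀ q : ℕ, q ≤ Q → ∀ p : ι,
        0 ≤ a p + ∑ t ∈ Finset.univ.filter (fun t : Fin Q => (t : ℕ) < q), m t p) := by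
  induction h using Relation.ReflTransGen.head_induction_on with
  | refl => exact ⟨0, Fin.elim0, fun t => t.elim0, by simp, fun q _ p => by simpa using ha p⟩
  | @head a c hac _ ih =>
    obtain ⟨hmove, hc⟩ := hac
    obtain ⟨Q, m, hP, hsum, hpartial⟩ := ih hc
    refine ⟨Q + 1, Fin.cons (c - a) m, Fin.cases hmove hP, fun p => ?_, ?_⟩
    · simp only [hsum p, Fin.sum_univ_succ, Fin.cons_zero, Fin.cons_succ, Pi.sub_apply]
      ring
    · rintro (_ | q) hq p
      · simpa using ha p
      · have := hpartial q (by omega) p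
        simp only [Fin.sum_filter_val_lt_succ, Fin.cons_zero, Fin.cons_succ, Pi.sub_apply]
        linarith

end Moves

theorem exists_alternating_corners {ι κ M : Type*} [Fintype ι] [Fintype κ] [AddCommMonoid M]
    [LinearOrder M] [IsOrderedCancelAddMonoid M] {a b : ι × κ → M}
    (hrow : ∀ i, ∑ j, a (i, j) = ∑ j, b (i, j)) (hcol : ∀ j, ∑ i, a (i, j) = ∑ i, b (i, j))
    (hab : a ≠ b) :
    ∃ i i' j j', i ≠ i' ∧ j ≠ j' ∧
      b (i, j) < a (i, j) ∧ a (i, j') < b (i, j') ∧ b (i', j') < a (i', j') := by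
  have ⟨i, j, hij⟩ : ∃ i j, b (i, j) < a (i, j) := by
    obtain ⟨⟨i₀, j₀⟩, hne⟩ := Function.ne_iff.mp hab
    rcases hne.lt_or_gt with hlt | hgt
    · obtain ⟨i, hi⟩ := Fintype.exists_lt_of_sum_eq_of_lt (hcol j₀) hlt
      exact ⟨i, j₀, hi⟩
    · exact ⟨i₀, j₀, hgt⟩
  obtain ⟨j', hj'⟩ := Fintype.exists_lt_of_sum_eq_of_lt (hrow i).symm hij
  obtain ⟨i', hi'⟩ := Fintype.exists_lt_of_sum_eq_of_lt (hcol j') hj'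
  refine ⟨i, i', j, j', ?_, ?_, hij, hj', hi'⟩
  · rintro rfl
    exact lt_asymm hj' hi'
  · rintro rfl
    exact lt_asymm hij hj'

section BasicMove

variable {k : ℕ}

theorem sum_basicMove_row (i i' j j' r : Fin k) : ∑ c, basicMove i i' j j' (r, c) = 0 := by
  simp [basicMove, Finset.sum_add_distrib, Finset.sum_sub_distrib, ite_and]

theorem sum_basicMove_col (i i' j j' c : Fin k) : ∑ r, basicMove i i' j j' (r, c) = 0 := by
  simp [basicMove, Finset.sum_add_distrib, Finset.sum_sub_distrib, ite_and]

theorem basicMove_eq_zero {i i' j j' : Fin k} {p : Fin k × Fin k} (h1 : p ≠ (i, j))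
    (h2 : p ≠ (i', j')) (h3 : p ≠ (i, j')) (h4 : p ≠ (i', j)) : basicMove i i' j j' p = 0 := by
  simp [basicMove, *]

theorem neg_one_le_basicMove (i i' j j' : Fin k) (p : Fin k × Fin k) :
    -1 ≤ basicMove i i' j j' p := by
  unfold basicMove
  split_ifs <;> simp_all

theorem basicMove_nonneg {i i' j j' : Fin k} {p : Fin k × Fin k} (h1 : p ≠ (i, j'))
    (h2 : p ≠ (i', j)) : 0 ≤ basicMove i i' j j' p := by
  unfold basicMove
  split_ifs <;> simp_all

theorem sum_natAbs_sub_add_basicMove_lt {a b : Fin k × Fin k → ℤ} {i i' j j' : Fin k}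
    (hi : i ≠ i') (hj : j ≠ j') (h₁ : b (i, j) < a (i, j)) (h₂ : a (i, j') < b (i, j'))
    (h₃ : b (i', j') < a (i', j')) :
    ∑ p, (b p - (a + basicMove i i' j' j) p).natAbs < ∑ p, (b p - a p).natAbs := by
  set S : Finset (Fin k × Fin k) := {(i, j), (i', j'), (i, j'), (i', j)}
  rw [← Finset.sum_add_sum_compl S, ← Finset.sum_add_sum_compl S (fun p => (b p - a p).natAbs)]
  have hout : ∑ p ∈ Sᶜ, (b p - (a + basicMove i i' j' j) p).natAbs
      = ∑ p ∈ Sᶜ, (b p - a p).natAbs := by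
    refine Finset.sum_congr rfl fun p hp => ?_
    simp only [S, Finset.mem_compl, Finset.mem_insert, Finset.mem_singleton, not_or] at hp
    rw [Pi.add_apply, basicMove_eq_zero hp.2.2.1 hp.2.2.2 hp.1 hp.2.1, add_zero]
  rw [hout, add_lt_add_iff_right]
  simp only [S, Finset.sum_insert, Finset.mem_insert, Finset.mem_singleton, Finset.sum_singleton,
    Prod.mk.injEq, hi, hj, hi.symm, hj.symm, Pi.add_apply, basicMove, and_false, and_true,
    or_self, not_false_eq_true, if_true, if_false]
  omega

theorem moveStep_add_basicMove {a b : Fin k × Fin k → ℤ} (ha : 0 ≤ a) (hb : 0 ≤ b)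
    {i i' j j' : Fin k} (hi : i ≠ i') (hj : j ≠ j') (h₁ : b (i, j) < a (i, j))
    (h₃ : b (i', j') < a (i', j')) :
    MoveStep IsBasicMove a (a + basicMove i i' j' j) := by
  refine ⟨⟨i, i', j', j, hi, hj.symm, add_sub_cancel_left _ _⟩, fun p => ?_⟩
  show 0 ≤ a p + basicMove i i' j' j p
  have hm := neg_one_le_basicMove i i' j' j p
  by_cases hp : p = (i, j) ∨ p = (i', j')
  · have : b p < a p := by rcases hp with rfl | rfl <;> assumption
    have hbp : 0 ≤ b p := hb p
    linarith
  · rw [not_or] at hp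
    have hap : 0 ≤ a p := ha p
    linarith [basicMove_nonneg hp.1 hp.2]

theorem reflTransGen_moveStep_of_sum_eq {a b : Fin k × Fin k → ℤ} (ha : 0 ≤ a) (hb : 0 ≤ b)
    (hrow : ∀ i, ∑ j, a (i, j) = ∑ j, b (i, j)) (hcol : ∀ j, ∑ i, a (i, j) = ∑ i, b (i, j)) :
    Relation.ReflTransGen (MoveStep IsBasicMove) a b := by
  by_cases hab : a = b
  · exact hab ▸ .refl
  obtain ⟨i, i', j, j', hi, hj, h₁, h₂, h₃⟩ := exists_alternating_corners hrow hcol hab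
  have hstep := moveStep_add_basicMove ha hb hi hj h₁ h₃
  refine .head hstep (reflTransGen_moveStep_of_sum_eq hstep.2 hb (fun r => ?_) (fun c => ?_))
  · simp only [Pi.add_apply, Finset.sum_add_distrib, sum_basicMove_row, add_zero, hrow r]
  · simp only [Pi.add_apply, Finset.sum_add_distrib, sum_basicMove_col, add_zero, hcol c]
termination_by ∑ p, (b p - a p).natAbs
decreasing_by exact sum_natAbs_sub_add_basicMove_lt hi hj h₁ h₂ h₃

end BasicMove

/-- The set of basic moves is a Markov basis for two-way tables with fixed margins:
for any two nonnegative integer `k×k` tables `n'` and `n''` with the same row sums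
and the same column sums, there is a finite sequence of basic moves whose total sum
takes `n'` to `n''` and all of whose partial sums applied to `n'` stay entrywise
nonnegative. -/
theorem basicMoves_markov_basis {k : ℕ} (n' n'' : Fin k × Fin k → ℕ)
    (hrow : ∀ i : Fin k, ∑ j : Fin k, n' (i, j) = ∑ j : Fin k, n'' (i, j))
    (hcol : ∀ j : Fin k, ∑ i : Fin k, n' (i, j) = ∑ i : Fin k, n'' (i, j)) :
    ∃ (Q : ℕ) (m : Fin Q → (Fin k × Fin k → ℤ)),
      (∀ t : Fin Q, IsBasicMove (m t)) ∧
      (∀ p : Fin k × Fin k, (n'' p : ℤ) = (n' p : ℤ) + ∑ t : Fin Q, m t p) ∧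
      (∀ q : ℕ, q ≤ Q → ∀ p : Fin k × Fin k,
        0 ≤ (n' p : ℤ) + ∑ t ∈ Finset.univ.filter (fun t : Fin Q => (t : ℕ) < q), m t p) := by
  have hrow' : ∀ i, ∑ j, (n' (i, j) : ℤ) = ∑ j, (n'' (i, j) : ℤ) := fun i => mod_cast hrow i
  have hcol' : ∀ j, ∑ i, (n' (i, j) : ℤ) = ∑ i, (n'' (i, j) : ℤ) := fun j => mod_cast hcol j
  have hwalk := reflTransGen_moveStep_of_sum_eq (a := fun p => (n' p : ℤ))
    (b := fun p => (n'' p : ℤ)) (fun p => Int.natCast_nonneg _) (fun p => Int.natCast_nonneg _)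
    hrow' hcol'
  exact exists_moves_of_reflTransGen_moveStep hwalk fun p => Int.natCast_nonneg _
end

section
/- Under a distance weighting scheme, the basic move with +1 at cells (i,h) and (j,j) and -1 at cells (i,j) and (j,h), for i < j < h, does not decrease the observed agreement: A_{o,w}(n+m) ≥ A_{o,w}(n), provided n(i,j) > 0 and n(j,h) > 0. The change equals (1/N)(u(i,j) + u(j,h) - u(i,h)) ≥ 0. -/
/-! Observed agreement is affine in the table, so the move changes it by `-1/N` times the
`u`-weighted sum of the move, `u(i,h) + u(j,j) - u(i,j) - u(j,h)`; with `u(j,j) = 0` this is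
minus the triangle-inequality gap. -/

open Finset

section WeightedSum

variable {α : Type*} [Fintype α]

theorem sum_mul_intCast_add (w : α → ℝ) (x y : α → ℤ) :
    ∑ p, w p * ((x p + y p : ℤ) : ℝ) = ∑ p, w p * (x p : ℝ) + ∑ p, w p * (y p : ℝ) := by
  simp only [Int.cast_add, mul_add, sum_add_distrib]

theorem sum_mul_basicMove [DecidableEq α] (w : α → ℝ) (a b c d : α) :
    ∑ p, w p * (((if p = a then 1 else 0) + (if p = b then 1 else 0)
        - (if p = c then 1 else 0) - (if p = d then 1 else 0) : ℤ) : ℝ)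
      = w a + w b - w c - w d := by
  push_cast
  simp only [mul_add, mul_sub, sum_add_distrib, sum_sub_distrib, mul_ite, mul_one, mul_zero,
    sum_ite_eq', mem_univ, if_true]

end WeightedSum

theorem distance_weights_move_increases_agreement_general {k : ℕ}
    (n : Fin k × Fin k → ℕ) (N : ℕ)
    (u : Fin k → Fin k → ℝ)
    (hdiag : ∀ a, u a a = 0)
    (htri : ∀ a b c : Fin k, u a c ≤ u a b + u b c)
    (i j h : Fin k) :
    let m : Fin k × Fin k → ℤ := fun p =>
      (if p = (i, h) then 1 else 0) + (if p = (j, j) then 1 else 0)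
        - (if p = (i, j) then 1 else 0) - (if p = (j, h) then 1 else 0)
    let A : (Fin k × Fin k → ℤ) → ℝ := fun x =>
      1 - (∑ p : Fin k × Fin k, u p.1 p.2 * (x p : ℝ)) / (N : ℝ)
    A (fun p => (n p : ℤ) + m p) - A (fun p => (n p : ℤ))
        = (1 / (N : ℝ)) * (u i j + u j h - u i h) ∧
      A (fun p => (n p : ℤ) + m p) ≥ A (fun p => (n p : ℤ)) := by
  intro m A
  have hmove : ∑ p : Fin k × Fin k, u p.1 p.2 * (m p : ℝ) = u i h - u i j - u j h := by
    rw [sum_mul_basicMove (fun p : Fin k × Fin k => u p.1 p.2), hdiag]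
    ring
  have hchange : A (fun p => (n p : ℤ) + m p) - A (fun p => (n p : ℤ))
      = (1 / (N : ℝ)) * (u i j + u j h - u i h) := by
    simp only [A]
    rw [sum_mul_intCast_add (fun p : Fin k × Fin k => u p.1 p.2) (fun p => (n p : ℤ)) m, hmove]
    ring
  have hgap : 0 ≤ (1 / (N : ℝ)) * (u i j + u j h - u i h) :=
    mul_nonneg (by positivity) (sub_nonneg.mpr (htri i j h))
  exact ⟨hchange, by linarith⟩

/-- Under a distance weighting scheme (disagreement weights `u` with `u(i,i) = 0`
satisfying the triangle inequality), the basic move with `+1` at `(i,h)` and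
`(j,j)` and `-1` at `(i,j)` and `(j,h)`, for `i < j < h`, does not decrease the
observed agreement: the change equals `(1/N)(u(i,j) + u(j,h) - u(i,h)) ≥ 0`. -/
theorem distance_weights_move_increases_agreement {k : ℕ}
    (n : Fin k × Fin k → ℕ) (N : ℕ) (hN : 0 < N)
    (htot : ∑ p : Fin k × Fin k, n p = N)
    (u : Fin k → Fin k → ℝ)
    (hdiag : ∀ a, u a a = 0)
    (htri : ∀ a b c : Fin k, u a c ≤ u a b + u b c)
    (i j h : Fin k) (hij : i < j) (hjh : j < h)
    (hpos1 : 0 < n (i, j)) (hpos2 : 0 < n (j, h)) :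
    let m : Fin k × Fin k → ℤ := fun p =>
      (if p = (i, h) then 1 else 0) + (if p = (j, j) then 1 else 0)
        - (if p = (i, j) then 1 else 0) - (if p = (j, h) then 1 else 0)
    let A : (Fin k × Fin k → ℤ) → ℝ := fun x =>
      1 - (∑ p : Fin k × Fin k, u p.1 p.2 * (x p : ℝ)) / (N : ℝ)
    A (fun p => (n p : ℤ) + m p) - A (fun p => (n p : ℤ))
        = (1 / (N : ℝ)) * (u i j + u j h - u i h) ∧
      A (fun p => (n p : ℤ) + m p) ≥ A (fun p => (n p : ℤ)) :=
  distance_weights_move_increases_agreement_general n N u hdiag htri i j h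
end

section
/- The two-way marginal projection of a multi-rater basic move onto a pair of coordinates (u,v) is either a two-way basic move or the zero move: it is a basic move exactly when the four projected pairs (i_u,i_v), (i'_u,i'_v), (j_u,j_v), (j'_u,j'_v) are all distinct, and is the zero table otherwise. -/
open Function

lemma sum_filter_prod_eq_ite_eq {α β γ M : Type*} [Fintype α] [DecidableEq α] [DecidableEq β]
    [DecidableEq γ] [AddCommMonoid M] (f : α → β) (g : α → γ) (a : α) (c : M) (p : β × γ) :
    ∑ z ∈ Finset.univ.filter (fun z => f z = p.1 ∧ g z = p.2), (if z = a then c else 0) =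
      if p = (f a, g a) then c else 0 := by
  simp [Prod.ext_iff, eq_comm]

lemma injective_vec4_iff {α : Type*} (a b c d : α) :
    Injective ![a, b, c, d] ↔ a ≠ b ∧ a ≠ c ∧ a ≠ d ∧ b ≠ c ∧ b ≠ d ∧ c ≠ d := by
  simp only [Matrix.vecCons, Fin.cons_injective_iff, Matrix.vecEmpty]
  simp [injective_of_subsingleton, and_assoc]

section BasicMove

variable {k : ℕ}

lemma basicMove_self_left (i j j' : Fin k) : basicMove i i j j' = 0 := by
  funext p
  simp only [basicMove, Pi.zero_apply]
  ring

lemma basicMove_self_right (i i' j : Fin k) : basicMove i i' j j = 0 := by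
  funext p
  simp only [basicMove, Pi.zero_apply]
  ring

lemma basicMove_apply_left_left {i i' j j' : Fin k} (hi : i ≠ i') (hj : j ≠ j') :
    basicMove i i' j j' (i, j) = 1 := by
  simp [basicMove, hi, hj]

lemma not_isBasicMove_zero : ¬ IsBasicMove (0 : Fin k × Fin k → ℤ) := by
  rintro ⟨i, i', j, j', hi, hj, h⟩
  have h1 := basicMove_apply_left_left hi hj
  rw [← h] at h1
  exact zero_ne_one h1

lemma basicMove_eq_zero_of_eq_or_eq {i i' j j' : Fin k} (h : i = i' ∨ j = j') :
    basicMove i i' j j' = 0 := by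
  rcases h with rfl | rfl
  · exact basicMove_self_left i j j'
  · exact basicMove_self_right i i' j

lemma isBasicMove_basicMove_iff {i i' j j' : Fin k} :
    IsBasicMove (basicMove i i' j j') ↔ i ≠ i' ∧ j ≠ j' := by
  refine ⟨fun h => ?_, fun ⟨hi, hj⟩ => ⟨i, i', j, j', hi, hj, rfl⟩⟩
  by_contra hne
  rw [basicMove_eq_zero_of_eq_or_eq (by tauto)] at h
  exact not_isBasicMove_zero h

end BasicMove

theorem multirater_basicMove_projection_general (r k : ℕ)
    (x x' : Fin r → Fin k)
    (S : Finset (Fin r))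
    (t v : Fin r) :
    let y : Fin r → Fin k := fun s => if s ∈ S then x s else x' s
    let y' : Fin r → Fin k := fun s => if s ∈ S then x' s else x s
    let m : (Fin r → Fin k) → ℤ := fun z =>
      (if z = x then 1 else 0) + (if z = x' then 1 else 0)
        - (if z = y then 1 else 0) - (if z = y' then 1 else 0)
    let P : Fin k × Fin k → ℤ := fun p =>
      ∑ z ∈ Finset.univ.filter
          (fun z : Fin r → Fin k => z t = p.1 ∧ z v = p.2), m z
    let pairs : Fin 4 → Fin k × Fin k :=
      ![(x t, x v), (x' t, x' v), (y t, y v), (y' t, y' v)]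
    (IsBasicMove P ↔ Function.Injective pairs) ∧
    (¬ Function.Injective pairs → ∀ p : Fin k × Fin k, P p = 0) := by
  intro y y' m P pairs
  have hP : ∀ p, P p = (if p = (x t, x v) then 1 else 0) + (if p = (x' t, x' v) then 1 else 0)
      - (if p = (y t, y v) then 1 else 0) - (if p = (y' t, y' v) then 1 else 0) := fun p => by
    simp only [P, m, Finset.sum_sub_distrib, Finset.sum_add_distrib, sum_filter_prod_eq_ite_eq]
  by_cases hS : v ∈ S ↔ t ∈ S
  · have hzero : ∀ p, P p = 0 := fun p => by
      by_cases ht : t ∈ S <;> simp [hP, y, y', ht, hS]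
    have hpairs : ¬ Injective pairs := by
      by_cases ht : t ∈ S
      · exact fun h => absurd (@h 0 2 (by simp [pairs, y, ht, hS])) (by decide)
      · exact fun h => absurd (@h 1 2 (by simp [pairs, y, ht, hS])) (by decide)
    exact ⟨iff_of_false (funext hzero ▸ not_isBasicMove_zero) hpairs, fun _ => hzero⟩
  · replace hS : v ∈ S ↔ t ∉ S := by tauto
    have hbasic : P = basicMove (x t) (x' t) (x v) (x' v) := funext fun p => by
      by_cases ht : t ∈ S
      · simp [hP, basicMove, y, y', ht, hS]
      · simp [hP, basicMove, y, y', ht, hS]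
        ring
    have hpairs : Injective pairs ↔ x t ≠ x' t ∧ x v ≠ x' v := by
      by_cases ht : t ∈ S <;> simp [pairs, y, y', ht, hS, injective_vec4_iff] <;> tauto
    refine ⟨by rw [hbasic, isBasicMove_basicMove_iff, hpairs], fun h => ?_⟩
    rw [hbasic, basicMove_eq_zero_of_eq_or_eq (by tauto)]
    exact fun _ => rfl

/-- The two-way marginal projection of a multi-rater basic move onto a pair of
coordinates `(t, v)` is either a two-way basic move or the zero move: it is a basic
move exactly when the four projected pairs of the `+1` cells `x, x'` and the `-1`
cells `y, y'` are all distinct, and is the zero table otherwise. -/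
theorem multirater_basicMove_projection (r k : ℕ) (hr : 2 ≤ r)
    (x x' : Fin r → Fin k)
    (D : Finset (Fin r))
    (hD : D = Finset.univ.filter (fun s => x s ≠ x' s))
    (hcard : 2 ≤ D.card)
    (S : Finset (Fin r)) (hSD : S ⊆ D) (hSne : S.Nonempty) (hSproper : S ≠ D)
    (t v : Fin r) (htv : t ≠ v) :
    let y : Fin r → Fin k := fun s => if s ∈ S then x s else x' s
    let y' : Fin r → Fin k := fun s => if s ∈ S then x' s else x s
    let m : (Fin r → Fin k) → ℤ := fun z =>
      (if z = x then 1 else 0) + (if z = x' then 1 else 0)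
        - (if z = y then 1 else 0) - (if z = y' then 1 else 0)
    let P : Fin k × Fin k → ℤ := fun p =>
      ∑ z ∈ Finset.univ.filter
          (fun z : Fin r → Fin k => z t = p.1 ∧ z v = p.2), m z
    let pairs : Fin 4 → Fin k × Fin k :=
      ![(x t, x v), (x' t, x' v), (y t, y v), (y' t, y' v)]
    (IsBasicMove P ↔ Function.Injective pairs) ∧
    (¬ Function.Injective pairs → ∀ p : Fin k × Fin k, P p = 0) :=
  multirater_basicMove_projection_general r k x x' S t v
end
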